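/- arXiv:2010.11256 — 2 statements merged into one kernel-verified Lean document; each statement's English description precedes it below -/
import Mathlib

section
/- Let f : S¹ → S¹ be an expansive covering map, let a ∈ S¹ be a periodic point of f, and let f_a be the first orientation-preserving return map of f to a. If the one-sided multiplier λ(a⁺) (respectively λ(a⁻)) exists, then λ(a⁺) ≥ 1 (respectively λ(a⁻) ≥ 1). -/
open Set Filter

noncomputable section

/-- The unit circle in `ℂ`. -/
def S1 : Set ℂ := {z : ℂ | ‖z‖ = 1}

/-- The parametrization `x ↦ e^{2πix}` of the unit circle. -/
noncomputable def expMap (x : ℝ) : ℂ := Complex.exp (2 * Real.pi * Complex.I * x)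

/-- The closed positively oriented arc from `a` to `b` on the unit circle. -/
def closedArc (a b : ℂ) : Set ℂ :=
  {z : ℂ | ∃ s t u : ℝ, a = expMap s ∧ z = expMap t ∧ b = expMap u ∧
    s ≤ t ∧ t ≤ u ∧ u < s + 1}

/-- The open positively oriented arc from `a` to `b` on the unit circle. -/
def openArc (a b : ℂ) : Set ℂ :=
  {z : ℂ | ∃ s t u : ℝ, a = expMap s ∧ z = expMap t ∧ b = expMap u ∧
    s < t ∧ t < u ∧ u < s + 1}

/-- `f` restricted to the unit circle is a covering of signed degree `d`:
it lifts under `x ↦ e^{2πix}` to a continuous map `F` with `F (x+1) = F x + d`.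
`d > 0` corresponds to an orientation-preserving covering of degree `d`, and
`d < 0` to an orientation-reversing covering of degree `|d|`. -/
def IsCircleCovering (f : ℂ → ℂ) (d : ℤ) : Prop :=
  ∃ F : ℝ → ℝ, Continuous F ∧ (∀ x : ℝ, f (expMap x) = expMap (F x)) ∧
    ∀ x : ℝ, F (x + 1) = F x + d

/-- The iterate `f^[m]` is an orientation-preserving circle covering. -/
def OrientPresIter (f : ℂ → ℂ) (m : ℕ) : Prop :=
  ∃ e : ℤ, 0 < e ∧ IsCircleCovering (f^[m]) e

/-- The iterate `f^[m]` is an orientation-reversing circle covering. -/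
def OrientRevIter (f : ℂ → ℂ) (m : ℕ) : Prop :=
  ∃ e : ℤ, e < 0 ∧ IsCircleCovering (f^[m]) e

/-- Expansivity of `f` on the unit circle. -/
def ExpansiveOn (f : ℂ → ℂ) : Prop :=
  ∃ δ : ℝ, 0 < δ ∧ ∀ a ∈ S1, ∀ b ∈ S1, a ≠ b →
    ∃ n : ℕ, δ < ‖f^[n] a - f^[n] b‖

/-- `h` is an orientation-preserving homeomorphism of the unit circle:
it lifts to a continuous strictly increasing map `H : ℝ → ℝ` commuting with `x ↦ x + 1`. -/
def OPCircleHomeo (h : ℂ → ℂ) : Prop :=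
  ∃ H : ℝ → ℝ, Continuous H ∧ StrictMono H ∧ (∀ x : ℝ, H (x + 1) = H x + 1) ∧
    ∀ x : ℝ, h (expMap x) = expMap (H x)

/-- A Markov partition `P(f; {a₀, …, a_r})` for a circle covering `f`. -/
structure MarkovPartition (f : ℂ → ℂ) (r : ℕ) (a : Fin (r + 1) → ℂ) : Prop where
  rpos : 1 ≤ r
  /-- The points `a₀, …, a_r` lie on the unit circle in positive cyclic order. -/
  cyclic : ∃ x : Fin (r + 1) → ℝ, StrictMono x ∧ (∀ k, a k = expMap (x k)) ∧
    x (Fin.last r) < x 0 + 1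
  /-- The closed arcs `A_k = [a_k, a_{k+1}]` cover the circle. -/
  cover : S1 ⊆ ⋃ k, closedArc (a k) (a (k + 1))
  /-- The arcs have pairwise disjoint interiors. -/
  disjInt : ∀ k j : Fin (r + 1), k ≠ j →
    openArc (a k) (a (k + 1)) ∩ openArc (a j) (a (j + 1)) = ∅
  /-- `f` is injective on each open arc. -/
  injOn : ∀ k, Set.InjOn f (openArc (a k) (a (k + 1)))
  /-- The Markov property. -/
  markov : ∀ k j : Fin (r + 1),
    (f '' openArc (a k) (a (k + 1)) ∩ openArc (a j) (a (j + 1))).Nonempty →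
    openArc (a j) (a (j + 1)) ⊆ f '' openArc (a k) (a (k + 1))
  /-- The set `{a₀, …, a_r}` is forward invariant. -/
  invariant : ∀ k, ∃ j, f (a k) = a j

/-- Condition (uv): piecewise conformal extensions on open sets `U_k`, `V_k` with
`⋃ {U_j : A_j ⊆ f(A_k)} ⊆ V_k`. -/
def CondUV (f : ℂ → ℂ) (r : ℕ) (a : Fin (r + 1) → ℂ) : Prop :=
  ∃ (U V : Fin (r + 1) → Set ℂ) (fk : Fin (r + 1) → ℂ → ℂ),
    (∀ k, IsOpen (U k)) ∧ (∀ k, IsOpen (V k)) ∧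
    (∀ k, openArc (a k) (a (k + 1)) ⊆ U k) ∧
    (∀ k, f '' openArc (a k) (a (k + 1)) ⊆ V k) ∧
    (∀ k, Set.InjOn (fk k) (U k)) ∧
    (∀ k, DifferentiableOn ℂ (fk k) (U k)) ∧
    (∀ k, fk k '' U k = V k) ∧
    (∀ k, Set.EqOn (fk k) f (openArc (a k) (a (k + 1)))) ∧
    (∀ k j, openArc (a j) (a (j + 1)) ⊆ f '' openArc (a k) (a (k + 1)) → U j ⊆ V k)

/-- Condition (hol): the restriction of `f` to each closed arc of the partition extends
holomorphically to a neighborhood of either endpoint. -/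
def CondHol (f : ℂ → ℂ) (r : ℕ) (a : Fin (r + 1) → ℂ) : Prop :=
  ∀ k : Fin (r + 1),
    (∃ W : Set ℂ, IsOpen W ∧ a k ∈ W ∧ ∃ g : ℂ → ℂ, DifferentiableOn ℂ g W ∧
      Set.EqOn g f (W ∩ closedArc (a k) (a (k + 1)))) ∧
    (∃ W : Set ℂ, IsOpen W ∧ a (k + 1) ∈ W ∧ ∃ g : ℂ → ℂ, DifferentiableOn ℂ g W ∧
      Set.EqOn g f (W ∩ closedArc (a k) (a (k + 1))))

/-- `q` is the orientation-preserving period of the periodic point `a`: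
the least `n ≥ 1` with `f^[n] a = a` and `f^[n]` orientation-preserving. -/
def OPPeriod (f : ℂ → ℂ) (a : ℂ) (q : ℕ) : Prop :=
  0 < q ∧ f^[q] a = a ∧ OrientPresIter f q ∧
    ∀ m : ℕ, 0 < m → m < q → ¬(f^[m] a = a ∧ OrientPresIter f m)

/-- The one-sided multiplier `λ(a⁺)` of the first return map `f^[q]` exists and equals `lam`. -/
def HasMultiplierPlus (f : ℂ → ℂ) (a : ℂ) (q : ℕ) (lam : ℝ) : Prop :=
  0 ≤ lam ∧ ∃ z₀ ∈ S1, z₀ ≠ a ∧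
    Filter.Tendsto (fun z : ℂ => (f^[q] z - a) / (z - a))
      (nhdsWithin a (openArc a z₀)) (nhds (lam : ℂ))

/-- The one-sided multiplier `λ(a⁻)` of the first return map `f^[q]` exists and equals `lam`. -/
def HasMultiplierMinus (f : ℂ → ℂ) (a : ℂ) (q : ℕ) (lam : ℝ) : Prop :=
  0 ≤ lam ∧ ∃ z₀ ∈ S1, z₀ ≠ a ∧
    Filter.Tendsto (fun z : ℂ => (f^[q] z - a) / (z - a))
      (nhdsWithin a (openArc z₀ a)) (nhds (lam : ℂ))

/-- `a` is an isolated fixed point (on the circle) of the return map `f^[q]`. -/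
def IsolatedFixedPt (f : ℂ → ℂ) (a : ℂ) (q : ℕ) : Prop :=
  ∃ ε : ℝ, 0 < ε ∧ ∀ z ∈ S1, z ≠ a → ‖z - a‖ < ε → f^[q] z ≠ z

/-- The return map `f^[q]` has, on the positive side of `a`, a holomorphic extension
with Taylor expansion `z + c (z - a)^(N+1) + O((z - a)^(N+2))`, `c ≠ 0`;
i.e. the parabolic point `a⁺` has `N(a⁺) = N`. -/
def TaylorPlus (f : ℂ → ℂ) (a : ℂ) (q : ℕ) (N : ℕ) : Prop :=
  0 < N ∧ ∃ z₁ ∈ S1, z₁ ≠ a ∧ ∃ W : Set ℂ, IsOpen W ∧ closedArc a z₁ ⊆ W ∧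
    ∃ g : ℂ → ℂ, DifferentiableOn ℂ g W ∧ Set.EqOn g (f^[q]) (closedArc a z₁) ∧
      ∃ c : ℂ, c ≠ 0 ∧
        Asymptotics.IsBigO (nhds a)
          (fun z : ℂ => g z - z - c * (z - a) ^ (N + 1))
          (fun z : ℂ => (z - a) ^ (N + 2))

/-- Negative-side version of `TaylorPlus`: the parabolic point `a⁻` has `N(a⁻) = N`. -/
def TaylorMinus (f : ℂ → ℂ) (a : ℂ) (q : ℕ) (N : ℕ) : Prop :=
  0 < N ∧ ∃ z₁ ∈ S1, z₁ ≠ a ∧ ∃ W : Set ℂ, IsOpen W ∧ closedArc z₁ a ⊆ W ∧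
    ∃ g : ℂ → ℂ, DifferentiableOn ℂ g W ∧ Set.EqOn g (f^[q]) (closedArc z₁ a) ∧
      ∃ c : ℂ, c ≠ 0 ∧
        Asymptotics.IsBigO (nhds a)
          (fun z : ℂ => g z - z - c * (z - a) ^ (N + 1))
          (fun z : ℂ => (z - a) ^ (N + 2))

/-- No iterate `f^[m'] a` with `m' < m` is a periodic point; used to express that
`m` is the minimal integer with `f^[m] a` periodic. -/
def MinPreperiod (f : ℂ → ℂ) (a : ℂ) (m : ℕ) : Prop :=
  ∀ m' : ℕ, m' < m → ¬ ∃ n : ℕ, 0 < n ∧ f^[n] (f^[m'] a) = f^[m'] a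

/-- `q` is the orientation-preserving period of the (pre)periodic point `a`. -/
def PrePeriodOf (f : ℂ → ℂ) (a : ℂ) (q : ℕ) : Prop :=
  ∃ m : ℕ, MinPreperiod f a m ∧ OPPeriod f (f^[m] a) q

/-- `a⁺` is hyperbolic with multiplier `lam > 1` (for preperiodic `a`, the multiplier is
taken at the periodic point on the orbit, with sides swapped if the connecting iterate
is orientation-reversing). -/
def SideHypPlus (f : ℂ → ℂ) (a : ℂ) (lam : ℝ) : Prop :=
  1 < lam ∧ ∃ m q : ℕ, MinPreperiod f a m ∧ OPPeriod f (f^[m] a) q ∧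
    ((OrientPresIter f m ∧ HasMultiplierPlus f (f^[m] a) q lam) ∨
     (OrientRevIter f m ∧ HasMultiplierMinus f (f^[m] a) q lam))

/-- `a⁻` is hyperbolic with multiplier `lam > 1`. -/
def SideHypMinus (f : ℂ → ℂ) (a : ℂ) (lam : ℝ) : Prop :=
  1 < lam ∧ ∃ m q : ℕ, MinPreperiod f a m ∧ OPPeriod f (f^[m] a) q ∧
    ((OrientPresIter f m ∧ HasMultiplierMinus f (f^[m] a) q lam) ∨
     (OrientRevIter f m ∧ HasMultiplierPlus f (f^[m] a) q lam))

/-- `a⁺` is parabolic: the one-sided multiplier equals `1` and the relevant periodic point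
is an isolated fixed point of its first return map. -/
def SideParPlus (f : ℂ → ℂ) (a : ℂ) : Prop :=
  ∃ m q : ℕ, MinPreperiod f a m ∧ OPPeriod f (f^[m] a) q ∧
    IsolatedFixedPt f (f^[m] a) q ∧
    ((OrientPresIter f m ∧ HasMultiplierPlus f (f^[m] a) q 1) ∨
     (OrientRevIter f m ∧ HasMultiplierMinus f (f^[m] a) q 1))

/-- `a⁻` is parabolic. -/
def SideParMinus (f : ℂ → ℂ) (a : ℂ) : Prop :=
  ∃ m q : ℕ, MinPreperiod f a m ∧ OPPeriod f (f^[m] a) q ∧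
    IsolatedFixedPt f (f^[m] a) q ∧
    ((OrientPresIter f m ∧ HasMultiplierMinus f (f^[m] a) q 1) ∨
     (OrientRevIter f m ∧ HasMultiplierPlus f (f^[m] a) q 1))

/-- `a⁺` is parabolic with multiplicity data `N(a⁺) = N`. -/
def SideParPlusN (f : ℂ → ℂ) (a : ℂ) (N : ℕ) : Prop :=
  ∃ m q : ℕ, MinPreperiod f a m ∧ OPPeriod f (f^[m] a) q ∧
    IsolatedFixedPt f (f^[m] a) q ∧
    ((OrientPresIter f m ∧ HasMultiplierPlus f (f^[m] a) q 1 ∧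
        TaylorPlus f (f^[m] a) q N) ∨
     (OrientRevIter f m ∧ HasMultiplierMinus f (f^[m] a) q 1 ∧
        TaylorMinus f (f^[m] a) q N))

/-- `a⁻` is parabolic with multiplicity data `N(a⁻) = N`. -/
def SideParMinusN (f : ℂ → ℂ) (a : ℂ) (N : ℕ) : Prop :=
  ∃ m q : ℕ, MinPreperiod f a m ∧ OPPeriod f (f^[m] a) q ∧
    IsolatedFixedPt f (f^[m] a) q ∧
    ((OrientPresIter f m ∧ HasMultiplierMinus f (f^[m] a) q 1 ∧
        TaylorMinus f (f^[m] a) q N) ∨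
     (OrientRevIter f m ∧ HasMultiplierPlus f (f^[m] a) q 1 ∧
        TaylorPlus f (f^[m] a) q N))

/-- `a` is symmetrically hyperbolic: `λ(a⁺) = λ(a⁻) > 1`. -/
def SymmHyperbolic (f : ℂ → ℂ) (a : ℂ) : Prop :=
  ∃ lam : ℝ, SideHypPlus f a lam ∧ SideHypMinus f a lam

/-- `a` is symmetrically parabolic: both sides parabolic with `N(a⁺) = N(a⁻)`. -/
def SymmParabolic (f : ℂ → ℂ) (a : ℂ) : Prop :=
  ∃ N : ℕ, SideParPlusN f a N ∧ SideParMinusN f a N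

/-- The distortion function `ρ_h(z, t)` of a circle homeomorphism `h`. -/
noncomputable def distortionAt (h : ℂ → ℂ) (z : ℂ) (t : ℝ) : ℝ :=
  max (‖h (expMap t * z) - h z‖ / ‖h (expMap (-t) * z) - h z‖)
      (‖h (expMap (-t) * z) - h z‖ / ‖h (expMap t * z) - h z‖)

/-- Condition (H/P→H/P): there is `μ > 0` matching parabolic sides of `a` to parabolic sides
of `b` with `N(a^±) = μ · N(b^±)`, and hyperbolic sides to hyperbolic sides with
`λ(b^±) = λ(a^±)^μ`. -/
def CondHH (f g : ℂ → ℂ) (a b : ℂ) : Prop :=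
  ∃ μ : ℝ, 0 < μ ∧
    (∀ N : ℕ, SideParPlusN f a N → ∃ N' : ℕ, SideParPlusN g b N' ∧ (N : ℝ) = μ * N') ∧
    (∀ N : ℕ, SideParMinusN f a N → ∃ N' : ℕ, SideParMinusN g b N' ∧ (N : ℝ) = μ * N') ∧
    (∀ lam : ℝ, SideHypPlus f a lam → SideHypPlus g b (lam ^ μ)) ∧
    (∀ lam : ℝ, SideHypMinus f a lam → SideHypMinus g b (lam ^ μ))

/-- Condition (H→P): `a⁺` and `a⁻` are hyperbolic and `b` is symmetrically parabolic. -/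
def CondHP (f g : ℂ → ℂ) (a b : ℂ) : Prop :=
  (∃ lam : ℝ, SideHypPlus f a lam) ∧ (∃ lam : ℝ, SideHypMinus f a lam) ∧ SymmParabolic g b

/-- The set `F_n = (f^[n-1])⁻¹({a₀, …, a_r}) ∩ S¹`. -/
def Fset (f : ℂ → ℂ) {r : ℕ} (a : Fin (r + 1) → ℂ) (n : ℕ) : Set ℂ :=
  {z : ℂ | z ∈ S1 ∧ f^[n - 1] z ∈ Set.range a}

/-- `A` is a complementary arc of `F_n`: the closure of a connected component
of `S¹ ∖ F_n`. -/
def IsComplArc (f : ℂ → ℂ) {r : ℕ} (a : Fin (r + 1) → ℂ) (n : ℕ) (A : Set ℂ) : Prop :=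
  ∃ z ∈ S1 \ Fset f a n, A = closure (connectedComponentIn (S1 \ Fset f a n) z)

/-- `φ` has relative distortion bounded by `M` on `X`. -/
def RelDistBdd (φ : ℂ → ℂ) (X : Set ℂ) (M : ℝ) : Prop :=
  ∀ A B : Set ℂ, A ⊆ X → B ⊆ X → 0 < Metric.diam B → 0 < Metric.diam (φ '' B) →
    M⁻¹ * (Metric.diam A / Metric.diam B) ≤ Metric.diam (φ '' A) / Metric.diam (φ '' B) ∧
    Metric.diam (φ '' A) / Metric.diam (φ '' B) ≤ M * (Metric.diam A / Metric.diam B)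

/-- `J` is a Jordan curve in `ℂ`. -/
def JordanCurve (J : Set ℂ) : Prop :=
  ∃ γ : ℂ → ℂ, ContinuousOn γ S1 ∧ Set.InjOn γ S1 ∧ γ '' S1 = J

/-- `J` is a welding curve for the circle homeomorphism `h`. -/
def IsWeldingPair (h : ℂ → ℂ) (J : Set ℂ) : Prop :=
  JordanCurve J ∧
  ∃ U V : Set ℂ, IsOpen U ∧ IsOpen V ∧ IsConnected U ∧ IsConnected V ∧
    Bornology.IsBounded U ∧ ¬ Bornology.IsBounded V ∧ Disjoint U V ∧
    U ∪ V = {z : ℂ | z ∉ J} ∧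
    ∃ H₁ H₂ : ℂ → ℂ,
      ContinuousOn H₁ (Metric.closedBall 0 1) ∧
      Set.InjOn H₁ (Metric.closedBall 0 1) ∧
      DifferentiableOn ℂ H₁ (Metric.ball 0 1) ∧
      H₁ '' Metric.ball 0 1 = U ∧
      H₁ '' Metric.closedBall 0 1 = U ∪ J ∧
      ContinuousOn H₂ {z : ℂ | 1 ≤ ‖z‖} ∧
      Set.InjOn H₂ {z : ℂ | 1 ≤ ‖z‖} ∧
      DifferentiableOn ℂ H₂ {z : ℂ | 1 < ‖z‖} ∧
      H₂ '' {z : ℂ | 1 < ‖z‖} = V ∧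
      H₂ '' {z : ℂ | 1 ≤ ‖z‖} = V ∪ J ∧
      Filter.Tendsto (fun z : ℂ => ‖H₂ z‖)
        (Filter.comap (fun z : ℂ => ‖z‖) Filter.atTop) Filter.atTop ∧
      ∀ z ∈ S1, H₂ (h z) = H₁ z

/-- `h` is a welding homeomorphism. -/
def IsWeldingHomeo (h : ℂ → ℂ) : Prop := ∃ J : Set ℂ, IsWeldingPair h J

/-- `J'` is the image of `J` under a Möbius transformation (whose pole avoids `J`). -/
def MoebiusEquivCurves (J J' : Set ℂ) : Prop :=
  ∃ p q u v : ℂ, p * v - q * u ≠ 0 ∧ (∀ z ∈ J, u * z + v ≠ 0) ∧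
    J' = (fun z : ℂ => (p * z + q) / (u * z + v)) '' J

/-- The inversion (anti-conformal reflection) in the circle with center `c` and radius `ρ`. -/
noncomputable def circleInv (c : ℂ) (ρ : ℝ) (z : ℂ) : ℂ :=
  c + (ρ : ℂ) ^ 2 / ((starRingEnd ℂ) z - (starRingEnd ℂ) c)

end

/-! Expansivity makes every continuous lift of an iterate of `f` locally injective, so the lift of
the orientation-preserving return map `f^[q]` is strictly increasing; normalise it to a lift `Q`
fixing `s`, where `a = e^{2πis}`. Expansivity, together with the continuity of the first `q`
iterates of `f` at `a`, also shows that `s` is the only point whose whole `Q`-orbit stays in a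
small neighbourhood `U` of `s`. If `λ(a⁺) < 1`, then `f^[q]` does not increase the chord distance
to `a` on a short arc to the right of `a`, i.e. `Q w ≤ w` for `w` slightly larger than `s`; as `Q`
is increasing and fixes `s`, the `Q`-orbit of such a `w` is trapped in `[s, w] ⊆ U`, which is
absurd. The side `a⁻` is the mirror image. -/

open Function Topology Real

section LocallyInjective

variable {α δ : Type*} [ConditionallyCompleteLinearOrder α] [DenselyOrdered α]
  [TopologicalSpace α] [OrderTopology α] [NoMinOrder α] [NoMaxOrder α]
  [LinearOrder δ] [TopologicalSpace δ] [OrderClosedTopology δ] {F : α → δ}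

theorem Continuous.not_isLocalMax_of_isLocallyInjective
    (hF : Continuous F) (hloc : IsLocallyInjective F) (m : α) : ¬ IsLocalMax F m := by
  intro hmax
  obtain ⟨U, hUo, hmU, hinj⟩ := hloc m
  obtain ⟨l, r, ⟨hlm, hmr⟩, hsub⟩ :=
    mem_nhds_iff_exists_Ioo_subset.1 (inter_mem (hUo.mem_nhds hmU) hmax)
  obtain ⟨l', hll', hl'm⟩ := exists_between hlm
  obtain ⟨r', hmr', hr'r⟩ := exists_between hmr
  have hIcc : Icc l' r' ⊆ Ioo l r := Icc_subset_Ioo hll' hr'r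
  have hl' : l' ∈ Icc l' r' := left_mem_Icc.2 (hl'm.trans hmr').le
  have hr' : r' ∈ Icc l' r' := right_mem_Icc.2 (hl'm.trans hmr').le
  have hm : m ∈ Icc l' r' := ⟨hl'm.le, hmr'.le⟩
  rcases hF.continuousOn.strictMonoOn_of_injOn_Icc' (hl'm.trans hmr').le
      (hinj.mono fun x hx => (hsub (hIcc hx)).1) with hmono | hanti
  · exact (hmono hm hr' hmr').not_ge (hsub (hIcc hr')).2
  · exact (hanti hl' hm hl'm).not_ge (hsub (hIcc hl')).2

theorem Continuous.injective_of_isLocallyInjective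
    (hF : Continuous F) (hloc : IsLocallyInjective F) : Injective F := by
  have hconst : ∀ u v, u < v → F u = F v → ∀ y ∈ Icc u v, F y = F u := by
    intro u v huv hFuv y hy
    have hend : ∀ m ∈ Icc u v, m ∉ Ioo u v → F m = F u := fun m hm hm' => by
      rcases hm.1.eq_or_lt with rfl | hum
      · rfl
      rcases hm.2.eq_or_lt with rfl | hmv
      · exact hFuv.symm
      exact absurd ⟨hum, hmv⟩ hm'
    obtain ⟨M, hM, hMmax⟩ := isCompact_Icc.exists_isMaxOn (nonempty_Icc.2 huv.le) hF.continuousOn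
    obtain ⟨m, hm, hmmin⟩ := isCompact_Icc.exists_isMinOn (nonempty_Icc.2 huv.le) hF.continuousOn
    have hMu : F M = F u := hend M hM fun hM' =>
      hF.not_isLocalMax_of_isLocallyInjective hloc M (hMmax.isLocalMax (Icc_mem_nhds hM'.1 hM'.2))
    have hmu : F m = F u := hend m hm fun hm' =>
      hF.not_isLocalMax_of_isLocallyInjective (δ := δᵒᵈ) hloc m
        (hmmin.isLocalMin (Icc_mem_nhds hm'.1 hm'.2))
    exact le_antisymm (hMu ▸ hMmax hy) (hmu ▸ hmmin hy)
  intro u v hFuv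
  by_contra hne
  wlog huv : u < v generalizing u v
  · exact this hFuv.symm (Ne.symm hne) ((Ne.symm hne).lt_of_le (not_lt.1 huv))
  obtain ⟨U, hUo, huU, hinj⟩ := hloc u
  obtain ⟨r, hur, hsub⟩ := exists_Ico_subset_of_mem_nhds (hUo.mem_nhds huU) ⟨v, huv⟩
  obtain ⟨y, huy, hyr⟩ := exists_between (lt_min hur huv)
  have hy : y ∈ Icc u v := ⟨huy.le, (hyr.trans_le (min_le_right _ _)).le⟩
  exact huy.ne' (hinj (hsub ⟨huy.le, hyr.trans_le (min_le_left _ _)⟩) huU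
    (hconst u v huv hFuv y hy))

end LocallyInjective

section Iterate

variable {α : Type*} [LinearOrder α] [TopologicalSpace α] [OrderTopology α] [DenselyOrdered α]
  {Q : α → α} {s : α} {U : Set α}

theorem Monotone.exists_gt_forall_iterate_mem [NoMaxOrder α] (hQ : Monotone Q) (hs : Q s = s)
    (h : ∀ᶠ w in 𝓝[>] s, Q w ≤ w) (hU : U ∈ 𝓝 s) :
    ∃ x, s < x ∧ ∀ k, Q^[k] x ∈ U := by
  obtain ⟨x, hsx, hsub⟩ := mem_nhdsGT_iff_exists_Ioc_subset.1 (h.and (nhdsWithin_le_nhds hU))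
  have hIcc : Icc s x ⊆ U := fun y hy =>
    hy.1.eq_or_lt.elim (fun h => h ▸ mem_of_mem_nhds hU) fun h => (hsub ⟨h, hy.2⟩).2
  have horbit : ∀ k, Q^[k] x ∈ Icc s x := by
    intro k
    induction k with
    | zero => exact ⟨hsx.le, le_rfl⟩
    | succ k ih =>
      rw [iterate_succ_apply']
      refine ⟨hs ▸ hQ ih.1, ?_⟩
      rcases ih.1.eq_or_lt with heq | hlt
      · rw [← heq, hs]; exact hsx.le
      · exact (hsub ⟨hlt, ih.2⟩).1.trans ih.2
  exact ⟨x, hsx, fun k => hIcc (horbit k)⟩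

theorem Monotone.exists_lt_forall_iterate_mem [NoMinOrder α] (hQ : Monotone Q) (hs : Q s = s)
    (h : ∀ᶠ w in 𝓝[<] s, w ≤ Q w) (hU : U ∈ 𝓝 s) :
    ∃ x, x < s ∧ ∀ k, Q^[k] x ∈ U :=
  hQ.dual.exists_gt_forall_iterate_mem (α := αᵒᵈ) hs h hU

end Iterate

section ExpMap

theorem expMap_eq_exp_ofReal_mul_I (x : ℝ) :
    expMap x = Complex.exp ((2 * π * x : ℝ) * Complex.I) := by
  unfold expMap; push_cast; ring_nf

theorem continuous_expMap : Continuous expMap := by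
  unfold expMap; fun_prop

theorem expMap_mem_S1 (x : ℝ) : expMap x ∈ S1 := by
  show ‖expMap x‖ = 1
  rw [expMap_eq_exp_ofReal_mul_I, Complex.norm_exp_ofReal_mul_I]

theorem expMap_eq_expMap_iff {u v : ℝ} : expMap u = expMap v ↔ ∃ k : ℤ, u = v + k := by
  have h2π : (2 * π * Complex.I) ≠ 0 := by simp [Real.pi_ne_zero]
  simp only [expMap, Complex.exp_eq_exp_iff_exists_int]
  refine exists_congr fun k => ⟨fun h => ?_, fun h => by rw [h]; push_cast; ring⟩
  have : (u : ℂ) = v + k := mul_left_cancel₀ h2π (by rw [h]; ring)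
  exact_mod_cast this

theorem expMap_add_intCast (x : ℝ) (k : ℤ) : expMap (x + k) = expMap x :=
  expMap_eq_expMap_iff.2 ⟨k, rfl⟩

theorem eq_of_expMap_eq {u v : ℝ} (h : expMap u = expMap v) (huv : |u - v| < 1) : u = v := by
  obtain ⟨k, rfl⟩ := expMap_eq_expMap_iff.1 h
  have hk : |(k : ℝ)| < 1 := by simpa using huv
  obtain rfl : k = 0 := by have := abs_lt.1 (show |k| < 1 by exact_mod_cast hk); omega
  simp

theorem exists_expMap_eq {z : ℂ} (hz : z ∈ S1) : ∃ t : ℝ, expMap t = z := by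
  refine ⟨z.arg / (2 * π), ?_⟩
  have hz1 : ‖z‖ = 1 := hz
  rw [expMap_eq_exp_ofReal_mul_I, mul_div_cancel₀ _ (by positivity)]
  simpa [hz1] using Complex.norm_mul_exp_arg_mul_I z

theorem exists_expMap_add_eq {z : ℂ} (hz : z ∈ S1) {s : ℝ} (hzs : z ≠ expMap s) :
    ∃ c ∈ Ioo (0 : ℝ) 1, expMap (s + c) = z := by
  obtain ⟨t, rfl⟩ := exists_expMap_eq hz
  refine ⟨Int.fract (t - s),
    ⟨(Int.fract_nonneg _).lt_of_ne fun h => hzs ?_, Int.fract_lt_one _⟩, ?_⟩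
  · exact expMap_eq_expMap_iff.2 ⟨⌊t - s⌋, by linarith [Int.floor_add_fract (t - s)]⟩
  · exact expMap_eq_expMap_iff.2 ⟨-⌊t - s⌋, by push_cast; linarith [Int.floor_add_fract (t - s)]⟩

theorem exists_expMap_sub_eq {z : ℂ} (hz : z ∈ S1) {s : ℝ} (hzs : z ≠ expMap s) :
    ∃ c ∈ Ioo (0 : ℝ) 1, expMap (s - c) = z := by
  obtain ⟨c, ⟨hc0, hc1⟩, rfl⟩ := exists_expMap_add_eq hz hzs
  exact ⟨1 - c, ⟨by linarith, by linarith⟩, by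
    rw [← expMap_add_intCast (s - (1 - c)) 1]; push_cast; ring_nf⟩

theorem norm_expMap_sub_expMap (u v : ℝ) :
    ‖expMap u - expMap v‖ = 2 * |Real.sin (π * (u - v))| := by
  have h : expMap u - expMap v =
      expMap v * (Complex.exp (Complex.I * (2 * π * (u - v) : ℝ)) - 1) := by
    simp only [expMap, mul_sub, ← Complex.exp_add]; push_cast; ring_nf
  rw [h, norm_mul, (expMap_mem_S1 v : ‖expMap v‖ = 1), one_mul,
    Complex.norm_exp_I_mul_ofReal_sub_one, norm_mul, Real.norm_two, Real.norm_eq_abs, mul_assoc,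
    mul_div_cancel_left₀ _ two_ne_zero]

theorem abs_sub_le_of_norm_expMap_sub_le {u v s : ℝ} (hu : |u - s| ≤ 1 / 2) (hv : |v - s| ≤ 1 / 2)
    (h : ‖expMap u - expMap s‖ ≤ ‖expMap v - expMap s‖) : |u - s| ≤ |v - s| := by
  have hsin : ∀ x : ℝ, |x| ≤ 1 / 2 → |Real.sin (π * x)| = Real.sin (π * |x|) := fun x hx => by
    have : 0 ≤ Real.sin (π * |x|) :=
      Real.sin_nonneg_of_nonneg_of_le_pi (by positivity) (by nlinarith [Real.pi_pos])
    rcases abs_choice x with h | h <;> rw [h] at this ⊢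
    · exact abs_of_nonneg this
    · rw [mul_neg, Real.sin_neg] at this ⊢; exact abs_of_nonpos (by linarith)
  rw [norm_expMap_sub_expMap, norm_expMap_sub_expMap, hsin _ hu, hsin _ hv] at h
  have hmem : ∀ x : ℝ, |x| ≤ 1 / 2 → π * |x| ∈ Icc (-(π / 2)) (π / 2) := fun x hx =>
    ⟨by nlinarith [Real.pi_pos, abs_nonneg x], by nlinarith [Real.pi_pos]⟩
  by_contra! hlt
  linarith [Real.strictMonoOn_sin (hmem _ hv) (hmem _ hu) (mul_lt_mul_of_pos_left hlt Real.pi_pos)]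

theorem tendsto_expMap_nhdsGT {s c : ℝ} (hc : c ∈ Ioo (0 : ℝ) 1) :
    Tendsto expMap (𝓝[>] s) (𝓝[openArc (expMap s) (expMap (s + c))] (expMap s)) :=
  tendsto_nhdsWithin_iff.2 ⟨continuous_expMap.continuousAt.mono_left nhdsWithin_le_nhds,
    eventually_of_mem (Ioo_mem_nhdsGT (by linarith [hc.1] : s < s + c)) fun w hw =>
      ⟨s, w, s + c, rfl, rfl, rfl, hw.1, hw.2, by linarith [hc.2]⟩⟩

theorem tendsto_expMap_nhdsLT {s c : ℝ} (hc : c ∈ Ioo (0 : ℝ) 1) :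
    Tendsto expMap (𝓝[<] s) (𝓝[openArc (expMap (s - c)) (expMap s)] (expMap s)) :=
  tendsto_nhdsWithin_iff.2 ⟨continuous_expMap.continuousAt.mono_left nhdsWithin_le_nhds,
    eventually_of_mem (Ioo_mem_nhdsLT (by linarith [hc.1] : s - c < s)) fun w hw =>
      ⟨s - c, w, s, rfl, rfl, rfl, hw.1, hw.2, by linarith [hc.2]⟩⟩

end ExpMap

section Dynamics

variable {f : ℂ → ℂ} {d : ℤ} {q : ℕ}

theorem iterate_expMap_eq {F : ℝ → ℝ} (hF : ∀ x, f (expMap x) = expMap (F x)) (n : ℕ) (x : ℝ) :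
    f^[n] (expMap x) = expMap (F^[n] x) :=
  ((Semiconj.iterate_right (fun x => (hF x).symm) n) x).symm

theorem IsCircleCovering.eventually_norm_iterate_sub_lt (hcov : IsCircleCovering f d) (q : ℕ)
    (x : ℝ) {ε : ℝ} (hε : 0 < ε) :
    ∀ᶠ u in 𝓝 x, ∀ j < q, ‖f^[j] (expMap u) - f^[j] (expMap x)‖ < ε := by
  obtain ⟨F, hFc, hF, -⟩ := hcov
  refine (Set.finite_Iio q).eventually_all.2 fun j _ => ?_
  simp only [iterate_expMap_eq hF, ← dist_eq_norm]
  exact Metric.tendsto_nhds.1 (continuous_expMap.comp (hFc.iterate j)).continuousAt ε hε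

theorem ExpansiveOn.exists_eq_of_forall_norm_le (hexp : ExpansiveOn f) :
    ∃ δ > 0, ∀ z ∈ S1, ∀ w ∈ S1, (∀ n, ‖f^[n] z - f^[n] w‖ ≤ δ) → z = w := by
  obtain ⟨δ, hδ, h⟩ := hexp
  refine ⟨δ, hδ, fun z hz w hw hzw => by_contra fun hne => ?_⟩
  obtain ⟨n, hn⟩ := h z hz w hw hne
  exact (hzw n).not_gt hn

theorem isLocallyInjective_of_lift_iterate (hexp : ExpansiveOn f) (hcov : IsCircleCovering f d)
    {G : ℝ → ℝ} (hG : ∀ x, f^[q] (expMap x) = expMap (G x)) : IsLocallyInjective G := by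
  obtain ⟨δ, hδ, hδexp⟩ := hexp.exists_eq_of_forall_norm_le
  intro x
  obtain ⟨U, hUsub, hUo, hxU⟩ := mem_nhds_iff.1 ((hcov.eventually_norm_iterate_sub_lt q x
    (half_pos hδ)).and (Metric.ball_mem_nhds x one_half_pos))
  refine ⟨U, hUo, hxU, fun u hu v hv huv => ?_⟩
  obtain ⟨hu, hux⟩ := hUsub hu
  obtain ⟨hv, hvx⟩ := hUsub hv
  refine eq_of_expMap_eq (hδexp _ (expMap_mem_S1 u) _ (expMap_mem_S1 v) fun n => ?_) ?_
  · rcases lt_or_ge n q with hn | hn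
    · linarith [norm_sub_le_norm_sub_add_norm_sub (f^[n] (expMap u)) (f^[n] (expMap x))
        (f^[n] (expMap v)), norm_sub_rev (f^[n] (expMap x)) (f^[n] (expMap v)), hu n hn, hv n hn]
    · obtain ⟨m, rfl⟩ := Nat.exists_eq_add_of_le' hn
      rw [iterate_add_apply, iterate_add_apply, hG, hG, huv, sub_self, norm_zero]
      exact hδ.le
  · rw [← Real.dist_eq]
    linarith [dist_triangle_right u v x, Metric.mem_ball.1 hux, Metric.mem_ball.1 hvx]

theorem OrientPresIter.exists_strictMono_lift (hq : OrientPresIter f q) (hexp : ExpansiveOn f)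
    (hcov : IsCircleCovering f d) {s : ℝ} (hfix : f^[q] (expMap s) = expMap s) :
    ∃ Q : ℝ → ℝ, Continuous Q ∧ StrictMono Q ∧ Q s = s ∧ ∀ x, f^[q] (expMap x) = expMap (Q x) := by
  obtain ⟨e, he, G, hGc, hG, hGper⟩ := hq
  have hGmono : StrictMono G := by
    refine (hGc.strictMono_of_inj (hGc.injective_of_isLocallyInjective
      (isLocallyInjective_of_lift_iterate hexp hcov hG))).resolve_right fun hanti => ?_
    have := hanti (lt_add_one 0)
    rw [hGper] at this
    linarith [show (0 : ℝ) < e by exact_mod_cast he]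
  obtain ⟨k, hk⟩ := expMap_eq_expMap_iff.1 ((hG s).symm.trans hfix)
  refine ⟨fun x => G x - k, hGc.sub continuous_const,
    fun x y hxy => sub_lt_sub_right (hGmono hxy) _, by simp [hk], fun x => ?_⟩
  rw [hG, ← expMap_add_intCast (G x - k) k, sub_add_cancel]

theorem exists_mem_nhds_forall_iterate_mem_imp_eq (hexp : ExpansiveOn f)
    (hcov : IsCircleCovering f d) (hq : 0 < q) {Q : ℝ → ℝ}
    (hQ : ∀ x, f^[q] (expMap x) = expMap (Q x)) {s : ℝ} (hs : Q s = s) :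
    ∃ U ∈ 𝓝 s, ∀ x, (∀ k, Q^[k] x ∈ U) → x = s := by
  obtain ⟨δ, hδ, hδexp⟩ := hexp.exists_eq_of_forall_norm_le
  refine ⟨_, (hcov.eventually_norm_iterate_sub_lt q s hδ).and
    (Metric.ball_mem_nhds s one_half_pos), fun x hx => ?_⟩
  have hfix : f^[q] (expMap s) = expMap s := by rw [hQ, hs]
  refine eq_of_expMap_eq (hδexp _ (expMap_mem_S1 x) _ (expMap_mem_S1 s) fun n => ?_) ?_
  · rw [← Nat.mod_add_div n q, iterate_add_apply, iterate_mul, iterate_expMap_eq hQ,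
      iterate_add_apply, iterate_mul, iterate_fixed hfix]
    exact ((hx (n / q)).1 (n % q) (Nat.mod_lt _ hq)).le
  · linarith [Real.dist_eq x s ▸ Metric.mem_ball.1 (hx 0).2]

end Dynamics

section Multiplier

variable {Q : ℝ → ℝ} {s : ℝ}

theorem eventually_abs_sub_le_of_tendsto {g : ℂ → ℂ} (hQ : ∀ x, g (expMap x) = expMap (Q x))
    (hQc : ContinuousAt Q s) (hs : Q s = s) {l : Filter ℝ} (hl : l ≤ 𝓝 s) {A : Set ℂ}
    (hA : Tendsto expMap l (𝓝[A] (expMap s))) {lam : ℝ} (hlam0 : 0 ≤ lam) (hlam1 : lam < 1)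
    (h : Tendsto (fun z => (g z - expMap s) / (z - expMap s)) (𝓝[A] (expMap s)) (𝓝 (lam : ℂ))) :
    ∀ᶠ w in l, |Q w - s| ≤ |w - s| := by
  have hnorm : ∀ᶠ z in 𝓝[A] (expMap s), ‖g z - expMap s‖ ≤ ‖z - expMap s‖ := by
    have h' := h.norm
    rw [Complex.norm_real, Real.norm_of_nonneg hlam0] at h'
    filter_upwards [h'.eventually_lt_const hlam1] with z hz
    rcases eq_or_ne z (expMap s) with rfl | hzs
    · rw [hQ, hs]
    · rw [norm_div, div_lt_one (norm_pos_iff.2 (sub_ne_zero.2 hzs))] at hz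
      exact hz.le
  have hQnear : ∀ᶠ w in 𝓝 s, |Q w - s| ≤ 1 / 2 := by
    simpa only [hs, Metric.mem_closedBall, Real.dist_eq] using
      hQc.eventually (Metric.closedBall_mem_nhds (Q s) one_half_pos)
  have hnear : ∀ᶠ w in 𝓝 s, |w - s| ≤ 1 / 2 := by
    filter_upwards [Metric.closedBall_mem_nhds s one_half_pos] with w hw
    rwa [Metric.mem_closedBall, Real.dist_eq] at hw
  filter_upwards [hA.eventually hnorm, hl hQnear, hl hnear] with w hw hQw hw'
  rw [hQ] at hw
  exact abs_sub_le_of_norm_expMap_sub_le hQw hw' hw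

variable (hQ : StrictMono Q) (hs : Q s = s) {U : Set ℝ} (hU : U ∈ 𝓝 s)
  (hUs : ∀ x, (∀ k, Q^[k] x ∈ U) → x = s)
include hQ hs hU hUs

theorem not_eventually_nhdsGT_abs_sub_le : ¬ ∀ᶠ w in 𝓝[>] s, |Q w - s| ≤ |w - s| := by
  intro h
  have hle : ∀ᶠ w in 𝓝[>] s, Q w ≤ w := by
    filter_upwards [h, self_mem_nhdsWithin] with w hw (hsw : s < w)
    rwa [abs_of_pos (sub_pos.2 hsw), abs_of_pos (sub_pos.2 (hs ▸ hQ hsw)),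
      sub_le_sub_iff_right] at hw
  obtain ⟨x, hsx, hx⟩ := hQ.monotone.exists_gt_forall_iterate_mem hs hle hU
  exact hsx.ne' (hUs x hx)

theorem not_eventually_nhdsLT_abs_sub_le : ¬ ∀ᶠ w in 𝓝[<] s, |Q w - s| ≤ |w - s| := by
  intro h
  have hle : ∀ᶠ w in 𝓝[<] s, w ≤ Q w := by
    filter_upwards [h, self_mem_nhdsWithin] with w hw (hws : w < s)
    rwa [abs_of_neg (sub_neg.2 hws), abs_of_neg (sub_neg.2 (hs ▸ hQ hws)),
      neg_sub, neg_sub, sub_le_sub_iff_left] at hw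
  obtain ⟨x, hxs, hx⟩ := hQ.monotone.exists_lt_forall_iterate_mem hs hle hU
  exact hxs.ne (hUs x hx)

end Multiplier

theorem multiplier_ge_one_of_expansive_general
    (f : ℂ → ℂ) (d : ℤ) (hcov : IsCircleCovering f d)
    (hexp : ExpansiveOn f)
    (a : ℂ) (ha : a ∈ S1) (q : ℕ) (hq : OPPeriod f a q) :
    (∀ lam : ℝ, HasMultiplierPlus f a q lam → 1 ≤ lam) ∧
    (∀ lam : ℝ, HasMultiplierMinus f a q lam → 1 ≤ lam) := by
  obtain ⟨hq0, hfix, hpres, -⟩ := hq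
  obtain ⟨s, rfl⟩ := exists_expMap_eq ha
  obtain ⟨Q, hQc, hQmono, hQs, hQ⟩ := hpres.exists_strictMono_lift hexp hcov hfix
  obtain ⟨U, hU, hUs⟩ := exists_mem_nhds_forall_iterate_mem_imp_eq hexp hcov hq0 hQ hQs
  constructor
  · rintro lam ⟨hlam0, z₀, hz₀, hz₀s, h⟩
    by_contra! hlam
    obtain ⟨c, hc, rfl⟩ := exists_expMap_add_eq hz₀ hz₀s
    exact not_eventually_nhdsGT_abs_sub_le hQmono hQs hU hUs <|
      eventually_abs_sub_le_of_tendsto hQ hQc.continuousAt hQs nhdsWithin_le_nhds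
        (tendsto_expMap_nhdsGT hc) hlam0 hlam h
  · rintro lam ⟨hlam0, z₀, hz₀, hz₀s, h⟩
    by_contra! hlam
    obtain ⟨c, hc, rfl⟩ := exists_expMap_sub_eq hz₀ hz₀s
    exact not_eventually_nhdsLT_abs_sub_le hQmono hQs hU hUs <|
      eventually_abs_sub_le_of_tendsto hQ hQc.continuousAt hQs nhdsWithin_le_nhds
        (tendsto_expMap_nhdsLT hc) hlam0 hlam h

/-- **Property (E4).** For an expansive circle covering `f` and a periodic point `a`
with first orientation-preserving return map `f^[q]`, the one-sided multipliers
`λ(a⁺)` and `λ(a⁻)`, whenever they exist, are at least `1`. -/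
theorem multiplier_ge_one_of_expansive
    (f : ℂ → ℂ) (d : ℤ) (hd : d ≠ 0) (hcov : IsCircleCovering f d)
    (hexp : ExpansiveOn f)
    (a : ℂ) (ha : a ∈ S1) (q : ℕ) (hq : OPPeriod f a q) :
    (∀ lam : ℝ, HasMultiplierPlus f a q lam → 1 ≤ lam) ∧
    (∀ lam : ℝ, HasMultiplierMinus f a q lam → 1 ≤ lam) :=
  multiplier_ge_one_of_expansive_general f d hcov hexp a ha q hq
end

section
/- Let d ≥ 2 and let f(z) = z + a₁/z + ⋯ + a_{d−1}/z^{d−1} − 1/(d·z^d) with a₁,…,a_{d−1} ∈ ℂ, regarded as a holomorphic function on ℂ ∖ {0}. If f is injective on 𝔻* = {z ∈ ℂ : |z| > 1}, then f′ has exactly d+1 zeros in ℂ ∖ {0} counted with multiplicity, all of these zeros lie on S¹, and they are simple and pairwise distinct; in other words, f has exactly d+1 distinct simple critical points, all lying on the unit circle. -/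
open Set Filter

/-!
Off the origin `f' z = P z / z ^ (d + 1)` for the monic polynomial `P = critPoly d a` of degree
`d + 1` with `P 0 = 1`, so the critical points are the roots of `P` and the product of their
norms is `1`.

Near a critical point `z₀` at which `f - f z₀` vanishes to order `n ≥ 2`, `f - f z₀ = h ^ n` for
a local coordinate `h`; hence two curves leaving `z₀` in directions `v₁ ≠ v₂` with
`v₁ ^ n = v₂ ^ n` have the same image. If `‖z₀‖ > 1` both curves stay in `𝔻*`, contradicting
injectivity, so all roots lie in the closed unit disc, hence on `S¹`. At `z₀ ∈ S¹` with `n ≥ 3`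
the directions `z₀ e^{± iπ/n}` both point into `𝔻*`, so every critical point is simple.
-/

open Filter Topology ComplexConjugate Polynomial
open scoped Real

lemma accPt_of_mem_nhds {X : Type*} [TopologicalSpace X] {x : X} [(𝓝[≠] x).NeBot] {s : Set X}
    (hs : s ∈ 𝓝 x) : AccPt x (𝓟 s) := by
  rw [accPt_iff_frequently_nhdsNE]
  exact (eventually_nhdsWithin_of_eventually_nhds hs).frequently

lemma accPt_setOf_one_lt_norm {E : Type*} [NormedAddCommGroup E] [NormedSpace ℝ E] {x : E}
    (hx : 1 ≤ ‖x‖) : AccPt x (𝓟 {y : E | 1 < ‖y‖}) := by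
  have hray : Tendsto (fun t : ℝ => (1 + t) • x) (𝓝[>] 0) (𝓝 x) := by
    have : Continuous (fun t : ℝ => (1 + t) • x) := by fun_prop
    simpa using (this.tendsto 0).mono_left nhdsWithin_le_nhds
  rw [accPt_iff_frequently]
  refine hray.frequently (Eventually.frequently ?_)
  filter_upwards [self_mem_nhdsWithin] with t (ht : 0 < t)
  have hnorm : ‖(1 + t) • x‖ = (1 + t) * ‖x‖ := by
    rw [norm_smul, Real.norm_of_nonneg (by linarith)]
  refine ⟨fun h => ?_, ?_⟩
  · have := congrArg norm h
    rw [hnorm] at this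
    nlinarith
  · show 1 < ‖(1 + t) • x‖
    rw [hnorm]
    nlinarith

section AnalyticOrder

variable {𝕜 E : Type*} [NontriviallyNormedField 𝕜] [NormedAddCommGroup E] [NormedSpace 𝕜 E]
  {f : 𝕜 → E} {z₀ : 𝕜}

lemma analyticOrderAt_sub_ne_top_of_injOn {s : Set 𝕜} (hinj : Set.InjOn f s)
    (hs : AccPt z₀ (𝓟 s)) : analyticOrderAt (f · - f z₀) z₀ ≠ ⊤ := by
  intro htop
  have hconst : ∀ᶠ z in 𝓝 z₀, f z = f z₀ := by
    simpa [sub_eq_zero] using analyticOrderAt_eq_top.mp htop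
  rw [accPt_iff_frequently] at hs
  obtain ⟨z₁, ⟨hz₁, hz₁s⟩, hfz₁⟩ := (hs.and_eventually hconst).exists
  obtain ⟨z₂, ⟨⟨-, hz₂s⟩, hfz₂⟩, hz₂₁⟩ :=
    ((hs.and_eventually hconst).and_eventually (eventually_ne_nhds hz₁.symm)).exists
  exact hz₂₁ (hinj hz₂s hz₁s (hfz₂.trans hfz₁.symm))

lemma AnalyticAt.natCast_add_one_le_analyticOrderAt_sub_iff [CharZero 𝕜] [CompleteSpace E]
    (hf : AnalyticAt 𝕜 f z₀) {k : ℕ} :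
    ((k + 1 : ℕ) : ℕ∞) ≤ analyticOrderAt (f · - f z₀) z₀ ↔
      ∀ i < k, iteratedDeriv (i + 1) f z₀ = 0 := by
  have hderiv : deriv (f · - f z₀) = deriv f := funext fun z => deriv_sub_const _
  rw [natCast_le_analyticOrderAt_iff_iteratedDeriv_eq_zero (hf.fun_sub analyticAt_const),
    Nat.forall_lt_succ_left]
  simp [iteratedDeriv_succ', hderiv]

end AnalyticOrder

section LocalNormalForm

variable {f : ℂ → ℂ} {z₀ : ℂ} {n : ℕ}

lemma AnalyticAt.exists_eventually_pow_eq {g : ℂ → ℂ} (hg : AnalyticAt ℂ g z₀) (hg₀ : g z₀ ≠ 0)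
    (hn : n ≠ 0) :
    ∃ ψ : ℂ → ℂ, AnalyticAt ℂ ψ z₀ ∧ ψ z₀ ≠ 0 ∧ ∀ᶠ z in 𝓝 z₀, ψ z ^ n = g z := by
  obtain ⟨c, hc⟩ := IsAlgClosed.exists_pow_nat_eq (g z₀) (Nat.pos_of_ne_zero hn)
  have hc₀ : c ≠ 0 := by
    rintro rfl
    exact hg₀ (by rw [← hc, zero_pow hn])
  have hnC : (n : ℂ) ≠ 0 := Nat.cast_ne_zero.mpr hn
  -- `g / g z₀` is near `1`, where the principal logarithm is analytic
  refine ⟨fun z => c * Complex.exp (Complex.log (g z / g z₀) / n), ?_,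
    mul_ne_zero hc₀ (Complex.exp_ne_zero _), ?_⟩
  · have h₁ : g z₀ / g z₀ ∈ Complex.slitPlane := by
      rw [div_self hg₀]
      exact Complex.one_mem_slitPlane
    exact analyticAt_const.mul
      (((hg.div analyticAt_const hg₀).clog h₁).div analyticAt_const hnC).cexp
  · filter_upwards [hg.continuousAt.eventually_ne hg₀] with z hz
    rw [mul_pow, ← Complex.exp_nat_mul, mul_div_cancel₀ _ hnC,
      Complex.exp_log (div_ne_zero hz hg₀), hc, mul_div_cancel₀ _ hg₀]

lemma AnalyticAt.exists_eventually_sub_eq_pow (hf : AnalyticAt ℂ f z₀)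
    (hn : analyticOrderAt (f · - f z₀) z₀ = n) :
    ∃ h : ℂ → ℂ, ∃ c ≠ 0, HasStrictDerivAt h c z₀ ∧ h z₀ = 0 ∧
      ∀ᶠ z in 𝓝 z₀, f z - f z₀ = h z ^ n := by
  obtain ⟨g, hg, hg₀, hfg⟩ := (hf.fun_sub analyticAt_const).analyticOrderAt_eq_natCast.mp hn
  have hn₀ : n ≠ 0 := by
    rintro rfl
    exact hg₀ (by simpa using hfg.self_of_nhds.symm)
  obtain ⟨ψ, hψ, hψ₀, hψg⟩ := hg.exists_eventually_pow_eq hg₀ hn₀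
  refine ⟨fun z => (z - z₀) * ψ z, ψ z₀, hψ₀, ?_, by simp, ?_⟩
  · have hlin : HasStrictDerivAt (fun z => z - z₀) 1 z₀ := (hasStrictDerivAt_id z₀).sub_const z₀
    simpa using hlin.fun_mul hψ.hasStrictDerivAt
  · filter_upwards [hfg, hψg] with z hfz hψz
    rw [hfz, mul_pow, hψz, smul_eq_mul]

lemma HasStrictDerivAt.exists_curve_map_eq_line {h : ℂ → ℂ} {c : ℂ}
    (hh : HasStrictDerivAt h c z₀) (hc : c ≠ 0) (v : ℂ) :
    ∃ γ : ℝ → ℂ, γ 0 = z₀ ∧ HasDerivAt γ v 0 ∧ ∀ᶠ t in 𝓝 0, h (γ t) = h z₀ + t * c * v := by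
  set V := hh.localInverse h c z₀ hc
  have hline : Tendsto (fun t : ℝ => h z₀ + t * c * v) (𝓝 0) (𝓝 (h z₀)) := by
    have : Continuous (fun t : ℝ => h z₀ + t * c * v) := by fun_prop
    simpa using this.tendsto 0
  refine ⟨fun t => V (h z₀ + t * c * v), ?_, ?_, hline.eventually (hh.eventually_right_inverse hc)⟩
  · simpa only [Complex.ofReal_zero, zero_mul, add_zero] using
      (hh.eventually_left_inverse hc).self_of_nhds
  have hlin : HasDerivAt (fun w : ℂ => h z₀ + w * c * v) (c * v) ((0 : ℝ) : ℂ) := by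
    simpa using (((hasDerivAt_id _).mul_const c).mul_const v).const_add (h z₀)
  have hV := (hh.to_localInverse hc).hasDerivAt.comp_of_eq ((0 : ℝ) : ℂ) hlin (by simp)
  rw [← mul_assoc, inv_mul_cancel₀ hc, one_mul] at hV
  exact hV.comp_ofReal

lemma AnalyticAt.exists_curves_ne_map_eq (hf : AnalyticAt ℂ f z₀)
    (hn : analyticOrderAt (f · - f z₀) z₀ = n) {v₁ v₂ : ℂ} (hv : v₁ ≠ v₂)
    (hpow : v₁ ^ n = v₂ ^ n) :
    ∃ γ₁ γ₂ : ℝ → ℂ, γ₁ 0 = z₀ ∧ γ₂ 0 = z₀ ∧ HasDerivAt γ₁ v₁ 0 ∧ HasDerivAt γ₂ v₂ 0 ∧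
      ∀ᶠ t in 𝓝[≠] 0, γ₁ t ≠ γ₂ t ∧ f (γ₁ t) = f (γ₂ t) := by
  obtain ⟨h, c, hc, hh, hh₀, hfh⟩ := hf.exists_eventually_sub_eq_pow hn
  obtain ⟨γ₁, hγ₁₀, hγ₁, hhγ₁⟩ := hh.exists_curve_map_eq_line hc v₁
  obtain ⟨γ₂, hγ₂₀, hγ₂, hhγ₂⟩ := hh.exists_curve_map_eq_line hc v₂
  have hfγ₁ := (hγ₁₀ ▸ hγ₁.continuousAt.tendsto).eventually hfh
  have hfγ₂ := (hγ₂₀ ▸ hγ₂.continuousAt.tendsto).eventually hfh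
  refine ⟨γ₁, γ₂, hγ₁₀, hγ₂₀, hγ₁, hγ₂, ?_⟩
  filter_upwards [nhdsWithin_le_nhds (hhγ₁.and (hhγ₂.and (hfγ₁.and hfγ₂))),
    self_mem_nhdsWithin] with t ⟨e₁, e₂, f₁, f₂⟩ (ht : t ≠ 0)
  rw [hh₀, zero_add] at e₁ e₂
  have htc : (t : ℂ) * c ≠ 0 := mul_ne_zero (by exact_mod_cast ht) hc
  refine ⟨fun heq => hv (mul_left_cancel₀ htc ?_), ?_⟩
  · rw [← e₁, ← e₂, heq]
  · rw [← sub_left_inj, f₁, f₂, e₁, e₂, mul_pow _ v₁, mul_pow _ v₂, hpow]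

end LocalNormalForm

lemma HasDerivAt.eventually_one_lt_norm {γ : ℝ → ℂ} {v : ℂ} (hγ : HasDerivAt γ v 0)
    (h₁ : 1 ≤ ‖γ 0‖) (hv : 0 < (conj (γ 0) * v).re) : ∀ᶠ t in 𝓝[>] 0, 1 < ‖γ t‖ := by
  set φ : ℝ → ℝ := fun t => (conj (γ 0) * γ t).re
  have hφ : HasDerivAt φ (conj (γ 0) * v).re 0 :=
    Complex.reCLM.hasFDerivAt.comp_hasDerivAt 0 (hγ.const_mul _)
  have hφ₀ : φ 0 = ‖γ 0‖ * ‖γ 0‖ := by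
    simp [φ, Complex.norm_mul_self_eq_normSq, Complex.normSq_apply]
  filter_upwards [(hasDerivAt_iff_tendsto_slope_left_right.mp hφ).2.eventually
    (eventually_gt_nhds hv), self_mem_nhdsWithin] with t hslope (ht : 0 < t)
  have hlt : φ 0 < φ t := by
    have := pos_of_slope_pos (f := fun s => φ s - φ 0) ht (by simpa [slope] using hslope)
      (sub_self _)
    linarith
  have hle : φ t ≤ ‖γ 0‖ * ‖γ t‖ := by
    simpa [φ] using Complex.re_le_norm (conj (γ 0) * γ t)
  nlinarith

section Directions

variable {n : ℕ}

lemma exp_pi_div_mul_I_ne (hn : 2 ≤ n) :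
    Complex.exp (↑(π / n) * Complex.I) ≠ Complex.exp (↑(-(π / n)) * Complex.I) := by
  have hsin : 0 < Real.sin (π / n) := by
    apply Real.sin_pos_of_pos_of_lt_pi (by positivity)
    rw [div_lt_iff₀ (by positivity)]
    have : (2 : ℝ) ≤ n := by exact_mod_cast hn
    nlinarith [Real.pi_pos]
  intro h
  have := congrArg Complex.im h
  rw [Complex.exp_ofReal_mul_I_im, Complex.exp_ofReal_mul_I_im, Real.sin_neg] at this
  linarith

lemma exp_pi_div_mul_I_pow_eq (hn : n ≠ 0) :
    Complex.exp (↑(π / n) * Complex.I) ^ n = Complex.exp (↑(-(π / n)) * Complex.I) ^ n := by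
  have hnC : (n : ℂ) ≠ 0 := Nat.cast_ne_zero.mpr hn
  rw [← Complex.exp_nat_mul, ← Complex.exp_nat_mul]
  push_cast
  rw [show (n : ℂ) * (π / n * Complex.I) = π * Complex.I by field_simp,
    show (n : ℂ) * (-(π / n) * Complex.I) = -(π * Complex.I) by field_simp,
    Complex.exp_pi_mul_I, Complex.exp_neg_pi_mul_I]

lemma exists_ne_pow_eq_pow_re_conj_mul_pos {z : ℂ} (hz : z ≠ 0) (hn : 3 ≤ n) :
    ∃ v₁ v₂ : ℂ, v₁ ≠ v₂ ∧ v₁ ^ n = v₂ ^ n ∧ 0 < (conj z * v₁).re ∧ 0 < (conj z * v₂).re := by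
  have hre : ∀ θ : ℝ, 0 < Real.cos θ → 0 < (conj z * (z * Complex.exp (θ * Complex.I))).re := by
    intro θ hθ
    rw [← mul_assoc, Complex.conj_mul', ← Complex.ofReal_pow, Complex.re_ofReal_mul,
      Complex.exp_ofReal_mul_I_re]
    exact mul_pos (by positivity) hθ
  have hcos : 0 < Real.cos (π / n) := by
    refine Real.cos_pos_of_mem_Ioo ⟨by linarith [Real.pi_pos, show 0 ≤ π / n by positivity], ?_⟩
    rw [div_lt_div_iff₀ (by positivity) two_pos]
    have : (3 : ℝ) ≤ n := by exact_mod_cast hn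
    nlinarith [Real.pi_pos]
  exact ⟨_, _, (mul_right_injective₀ hz).ne (exp_pi_div_mul_I_ne (by omega)),
    by rw [mul_pow, mul_pow, exp_pi_div_mul_I_pow_eq (by omega)],
    hre _ hcos, hre _ (by rwa [Real.cos_neg])⟩

end Directions

section CriticalPoints

variable {f : ℂ → ℂ} {z₀ : ℂ}

lemma AnalyticAt.deriv_ne_zero_of_injOn {s : Set ℂ} (hf : AnalyticAt ℂ f z₀) (hs : s ∈ 𝓝 z₀)
    (hinj : Set.InjOn f s) : deriv f z₀ ≠ 0 := by
  intro hderiv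
  obtain ⟨n, hn⟩ := ENat.ne_top_iff_exists.mp
    (analyticOrderAt_sub_ne_top_of_injOn hinj (accPt_of_mem_nhds hs))
  have h2n : 2 ≤ n := by
    have : ((1 + 1 : ℕ) : ℕ∞) ≤ analyticOrderAt (f · - f z₀) z₀ :=
      hf.natCast_add_one_le_analyticOrderAt_sub_iff.mpr (by simpa using hderiv)
    exact_mod_cast hn ▸ this
  obtain ⟨γ₁, γ₂, hγ₁₀, hγ₂₀, hγ₁, hγ₂, hev⟩ := hf.exists_curves_ne_map_eq hn.symm
    (exp_pi_div_mul_I_ne h2n) (exp_pi_div_mul_I_pow_eq (by omega))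
  have hmem₁ : ∀ᶠ t in 𝓝[≠] 0, γ₁ t ∈ s :=
    nhdsWithin_le_nhds ((hγ₁₀ ▸ hγ₁.continuousAt.tendsto).eventually hs)
  have hmem₂ : ∀ᶠ t in 𝓝[≠] 0, γ₂ t ∈ s :=
    nhdsWithin_le_nhds ((hγ₂₀ ▸ hγ₂.continuousAt.tendsto).eventually hs)
  obtain ⟨t, ⟨hne, heq⟩, h₁, h₂⟩ := (hev.and (hmem₁.and hmem₂)).exists
  exact hne (hinj h₁ h₂ heq)

lemma AnalyticAt.deriv_deriv_ne_zero_of_injOn (hf : AnalyticAt ℂ f z₀) (hz₀ : 1 ≤ ‖z₀‖)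
    (hinj : Set.InjOn f {z : ℂ | 1 < ‖z‖}) (hderiv : deriv f z₀ = 0) :
    deriv (deriv f) z₀ ≠ 0 := by
  intro hderiv₂
  obtain ⟨n, hn⟩ := ENat.ne_top_iff_exists.mp
    (analyticOrderAt_sub_ne_top_of_injOn hinj (accPt_setOf_one_lt_norm hz₀))
  have h3n : 3 ≤ n := by
    have : ((2 + 1 : ℕ) : ℕ∞) ≤ analyticOrderAt (f · - f z₀) z₀ := by
      refine hf.natCast_add_one_le_analyticOrderAt_sub_iff.mpr fun i hi => ?_
      interval_cases i
      · simpa using hderiv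
      · simpa [iteratedDeriv_succ] using hderiv₂
    exact_mod_cast hn ▸ this
  obtain ⟨v₁, v₂, hv, hpow, hv₁, hv₂⟩ :=
    exists_ne_pow_eq_pow_re_conj_mul_pos (norm_pos_iff.mp (one_pos.trans_le hz₀)) h3n
  obtain ⟨γ₁, γ₂, hγ₁₀, hγ₂₀, hγ₁, hγ₂, hev⟩ := hf.exists_curves_ne_map_eq hn.symm hv hpow
  have hout₁ := hγ₁.eventually_one_lt_norm (hγ₁₀ ▸ hz₀) (hγ₁₀ ▸ hv₁)
  have hout₂ := hγ₂.eventually_one_lt_norm (hγ₂₀ ▸ hz₀) (hγ₂₀ ▸ hv₂)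
  obtain ⟨t, ⟨hne, heq⟩, h₁, h₂⟩ :=
    ((hev.filter_mono (nhdsGT_le_nhdsNE 0)).and (hout₁.and hout₂)).exists
  exact hne (hinj h₁ h₂ heq)

end CriticalPoints

lemma Polynomial.Monic.norm_eq_one_of_mem_roots {P : ℂ[X]} (hP : P.Monic) (h₀ : ‖P.eval 0‖ = 1)
    (hle : ∀ r ∈ P.roots, ‖r‖ ≤ 1) : ∀ r ∈ P.roots, ‖r‖ = 1 := by
  intro r hr
  have hprod : ‖P.roots.prod‖ = 1 := by
    rwa [← coeff_zero_eq_eval_zero, (IsAlgClosed.splits P).coeff_zero_eq_prod_roots_of_monic hP,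
      norm_mul, norm_pow, norm_neg, norm_one, one_pow, one_mul] at h₀
  have hrest : ‖(P.roots.erase r).prod‖ ≤ 1 :=
    Multiset.prod_induction (‖·‖ ≤ 1) _
      (fun x y hx hy => (norm_mul_le x y).trans (mul_le_one₀ hx (norm_nonneg y) hy)) (by simp)
      fun x hx => hle x (Multiset.mem_of_mem_erase hx)
  rw [← Multiset.cons_erase hr, Multiset.prod_cons, norm_mul] at hprod
  nlinarith [hle r hr, norm_nonneg r, norm_nonneg (P.roots.erase r).prod]

lemma Polynomial.nodup_roots_of_eval_derivative_ne_zero {K : Type*} [Field K] {P : K[X]}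
    (hP : P ≠ 0) (h : ∀ r ∈ P.roots, P.derivative.eval r ≠ 0) : P.roots.Nodup := by
  classical
  refine Multiset.nodup_iff_count_le_one.mpr fun r => ?_
  rw [count_roots]
  refine not_lt.mp fun hlt => ?_
  obtain ⟨hr, hr'⟩ := (one_lt_rootMultiplicity_iff_isRoot hP).mp hlt
  exact h r ((mem_roots hP).mpr hr) hr'

lemma Multiset.Nodup.exists_injective_fin {α : Type*} {s : Multiset α} {n : ℕ} (hs : s.Nodup)
    (hn : Multiset.card s = n) :
    ∃ e : Fin n → α, Function.Injective e ∧ ∀ x, x ∈ s ↔ ∃ i, x = e i := by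
  subst hn
  induction s using Quot.inductionOn with
  | h l =>
    exact ⟨l.get, List.nodup_iff_injective_get.mp hs,
      fun x => List.mem_iff_get.trans (exists_congr fun i => eq_comm)⟩

lemma deriv_deriv_eq_of_isRoot {f : ℂ → ℂ} {P : ℂ[X]} {N : ℕ}
    (hf : ∀ z ≠ 0, HasDerivAt f (P.eval z / z ^ N) z) {r : ℂ} (hr : r ≠ 0) (hroot : P.IsRoot r) :
    deriv (deriv f) r = P.derivative.eval r / r ^ N := by
  have hderiv : deriv f =ᶠ[𝓝 r] fun z => P.eval z / z ^ N := by
    filter_upwards [eventually_ne_nhds hr] with z hz using (hf z hz).deriv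
  rw [hderiv.deriv_eq, ((P.hasDerivAt r).fun_div (hasDerivAt_pow N r) (pow_ne_zero N hr)).deriv,
    hroot.eq_zero]
  field_simp
  ring

/-- `z ^ (d + 1)` times the derivative of `z + ∑ aᵢ / zⁱ - 1 / (d zᵈ)`. -/
noncomputable def critPoly (d : ℕ) (a : ℕ → ℂ) : ℂ[X] :=
  X ^ (d + 1) + 1 - ∑ i ∈ Finset.Icc 1 (d - 1), C (i * a i) * X ^ (d - i)

lemma critPoly_eq_X_pow_add (d : ℕ) (a : ℕ → ℂ) :
    critPoly d a = X ^ (d + 1) + (1 - ∑ i ∈ Finset.Icc 1 (d - 1), C (i * a i) * X ^ (d - i)) :=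
  add_sub_assoc _ _ _

lemma degree_critPoly_sub_X_pow_lt (d : ℕ) (a : ℕ → ℂ) :
    (1 - ∑ i ∈ Finset.Icc 1 (d - 1), C (i * a i) * X ^ (d - i) : ℂ[X]).degree <
      (X ^ (d + 1) : ℂ[X]).degree := by
  have hle : (1 - ∑ i ∈ Finset.Icc 1 (d - 1), C (i * a i) * X ^ (d - i) : ℂ[X]).natDegree ≤ d :=
    (natDegree_sub_le _ _).trans <| max_le (by simp) <| natDegree_sum_le_of_forall_le _ _
      fun i _ => (natDegree_C_mul_X_pow_le _ _).trans (Nat.sub_le _ _)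
  rw [degree_X_pow]
  exact (degree_le_of_natDegree_le hle).trans_lt (by exact_mod_cast Nat.lt_succ_self d)

lemma critPoly_monic (d : ℕ) (a : ℕ → ℂ) : (critPoly d a).Monic := by
  rw [critPoly_eq_X_pow_add]
  exact (monic_X_pow _).add_of_left (degree_critPoly_sub_X_pow_lt d a)

lemma natDegree_critPoly (d : ℕ) (a : ℕ → ℂ) : (critPoly d a).natDegree = d + 1 := by
  rw [critPoly_eq_X_pow_add, natDegree_add_eq_left_of_degree_lt (degree_critPoly_sub_X_pow_lt d a),
    natDegree_X_pow]

lemma critPoly_eval_zero (d : ℕ) (a : ℕ → ℂ) : (critPoly d a).eval 0 = 1 := by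
  have hsum : ∑ i ∈ Finset.Icc 1 (d - 1), (i * a i : ℂ) * 0 ^ (d - i) = 0 :=
    Finset.sum_eq_zero fun i hi => by
      rw [zero_pow (by have := Finset.mem_Icc.mp hi; omega), mul_zero]
  simp [critPoly, eval_finsetSum, hsum]

lemma ne_zero_of_mem_roots_critPoly {d : ℕ} {a : ℕ → ℂ} {r : ℂ} (hr : r ∈ (critPoly d a).roots) :
    r ≠ 0 := by
  rintro rfl
  simpa [critPoly_eval_zero] using (mem_roots (critPoly_monic d a).ne_zero).mp hr

lemma hasDerivAt_const_div_pow (c : ℂ) {k N : ℕ} (hk : k ≤ N) {z : ℂ} (hz : z ≠ 0) :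
    HasDerivAt (fun z => c / z ^ k) (-(k * c * z ^ (N - k)) / z ^ (N + 1)) z := by
  refine (((hasDerivAt_pow k z).inv (pow_ne_zero k hz)).const_mul c).congr_deriv ?_
  rcases Nat.eq_zero_or_pos k with rfl | hk₀
  · simp
  have hpow : z ^ (k - 1) * z ^ (N + 1) = z ^ (N - k) * (z ^ k) ^ 2 := by
    rw [← pow_mul, ← pow_add, ← pow_add]
    congr 1
    omega
  rw [mul_div_assoc', div_eq_div_iff (pow_ne_zero _ (pow_ne_zero _ hz)) (pow_ne_zero _ hz)]
  linear_combination (-(k * c)) * hpow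

lemma hasDerivAt_truncated {d : ℕ} (hd : d ≠ 0) (a : ℕ → ℂ) {z : ℂ} (hz : z ≠ 0) :
    HasDerivAt (fun z : ℂ => z + (∑ i ∈ Finset.Icc 1 (d - 1), a i / z ^ i) - 1 / ((d : ℂ) * z ^ d))
      ((critPoly d a).eval z / z ^ (d + 1)) z := by
  have hsum := HasDerivAt.fun_sum (u := Finset.Icc 1 (d - 1)) fun i hi =>
    hasDerivAt_const_div_pow (a i) (k := i) (N := d) (by have := Finset.mem_Icc.mp hi; omega) hz
  have hlast := hasDerivAt_const_div_pow (1 / (d : ℂ)) (k := d) (N := d) le_rfl hz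
  simp only [div_div] at hlast
  refine (((hasDerivAt_id z).add hsum).sub hlast).congr_deriv ?_
  have hdC : (d : ℂ) ≠ 0 := Nat.cast_ne_zero.mpr hd
  have heval : (critPoly d a).eval z =
      z ^ (d + 1) + 1 - ∑ i ∈ Finset.Icc 1 (d - 1), i * a i * z ^ (d - i) := by
    simp [critPoly, eval_finsetSum]
  rw [heval, Nat.sub_self, pow_zero, ← Finset.sum_div, Finset.sum_neg_distrib]
  field_simp
  ring

/-- **Critical points of maps in `Σ_d^*`.** If
`f(z) = z + a₁/z + ⋯ + a_{d−1}/z^{d−1} − 1/(d·z^d)` is injective on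
`𝔻* = {|z| > 1}`, then `f′` has exactly `d + 1` zeros in `ℂ ∖ {0}` counted with
multiplicity: they are pairwise distinct, simple, and all lie on the unit circle. -/
theorem critical_points_of_truncated_univalent
    (d : ℕ) (hd : 2 ≤ d) (a : ℕ → ℂ)
    (f : ℂ → ℂ)
    (hf : ∀ z : ℂ, f z =
      z + (∑ i ∈ Finset.Icc 1 (d - 1), a i / z ^ i) - 1 / ((d : ℂ) * z ^ d))
    (hinj : Set.InjOn f {z : ℂ | 1 < ‖z‖}) :
    ∃ zs : Fin (d + 1) → ℂ,
      Function.Injective zs ∧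
      (∀ i, zs i ∈ S1) ∧
      (∀ z : ℂ, z ≠ 0 → (deriv f z = 0 ↔ ∃ i, z = zs i)) ∧
      (∀ i, deriv f (zs i) = 0 ∧ deriv (deriv f) (zs i) ≠ 0) := by
  set P := critPoly d a
  have hP : P ≠ 0 := (critPoly_monic d a).ne_zero
  have hderiv : ∀ z ≠ 0, HasDerivAt f (P.eval z / z ^ (d + 1)) z := fun z hz =>
    funext hf ▸ hasDerivAt_truncated (by omega) a hz
  have han : ∀ z ≠ 0, AnalyticAt ℂ f z := fun z hz =>
    DifferentiableOn.analyticAt (fun w hw => (hderiv w hw).differentiableAt.differentiableWithinAt)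
      (isOpen_ne.mem_nhds hz)
  have hcrit : ∀ z ≠ 0, deriv f z = 0 ↔ z ∈ P.roots := fun z hz => by
    rw [(hderiv z hz).deriv, div_eq_zero_iff, mem_roots hP, IsRoot, or_iff_left (pow_ne_zero _ hz)]
  have hne : ∀ r ∈ P.roots, r ≠ 0 := fun r => ne_zero_of_mem_roots_critPoly
  have hcrit' : ∀ r ∈ P.roots, deriv f r = 0 := fun r hr => (hcrit r (hne r hr)).mpr hr
  have hnorm : ∀ r ∈ P.roots, ‖r‖ = 1 :=
    (critPoly_monic d a).norm_eq_one_of_mem_roots (by simp [critPoly_eval_zero]) fun r hr =>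
      not_lt.mp fun h => (han r (hne r hr)).deriv_ne_zero_of_injOn
        ((isOpen_lt continuous_const continuous_norm).mem_nhds h) hinj (hcrit' r hr)
  have hsimple : ∀ r ∈ P.roots, deriv (deriv f) r ≠ 0 := fun r hr =>
    (han r (hne r hr)).deriv_deriv_ne_zero_of_injOn (hnorm r hr).ge hinj (hcrit' r hr)
  obtain ⟨zs, hzs, hmem⟩ := (nodup_roots_of_eval_derivative_ne_zero hP fun r hr h =>
      hsimple r hr (by rw [deriv_deriv_eq_of_isRoot hderiv (hne r hr) ((mem_roots hP).mp hr), h,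
        zero_div])).exists_injective_fin
    (IsAlgClosed.card_roots_eq_natDegree.trans (natDegree_critPoly d a))
  have hroot : ∀ i, zs i ∈ P.roots := fun i => (hmem _).mpr ⟨i, rfl⟩
  exact ⟨zs, hzs, fun i => hnorm _ (hroot i), fun z hz => (hcrit z hz).trans (hmem z),
    fun i => ⟨hcrit' _ (hroot i), hsimple _ (hroot i)⟩⟩
end
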